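/- arXiv:0812.1367 — 2 statements merged into one kernel-verified Lean document; each statement's English description precedes it below -/
import Mathlib

section
/- Suppose μ, γ, β, w, Q_* are as in the stationary-solution setting, and suppose that for every s ∈ [0,m], γ(0,Q_*(0))·β(s,Q_*(s)) ≤ μ(s,Q_*(s)). Then R(Q_*) := ∫₀ᵐ β(s,Q_*(s))·(γ(0,Q_*(0))/γ(s,Q_*(s)))·exp(−∫₀ˢ μ(r,Q_*(r))/γ(r,Q_*(r)) dr) ds < 1. -/
open Set intervalIntegral

theorem stmt3 (m : ℝ) (hm : 0 < m)
    (γ μ β : ℝ → ℝ → ℝ) (Q : ℝ → ℝ)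
    (hγ : Continuous fun p : ℝ × ℝ => γ p.1 p.2) (hγpos : ∀ s q, 0 < γ s q)
    (hμ : Continuous fun p : ℝ × ℝ => μ p.1 p.2) (hμnn : ∀ s q, 0 ≤ μ s q)
    (hβ : Continuous fun p : ℝ × ℝ => β p.1 p.2) (hβnn : ∀ s q, 0 ≤ β s q)
    (hQ : ContinuousOn Q (Icc 0 m)) (hQnn : ∀ s ∈ Icc (0:ℝ) m, 0 ≤ Q s)
    (hdiss : ∀ s ∈ Icc (0:ℝ) m, γ 0 (Q 0) * β s (Q s) ≤ μ s (Q s)) :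
    (∫ s in (0:ℝ)..m, β s (Q s) * (γ 0 (Q 0) / γ s (Q s)) *
      Real.exp (-∫ r in (0:ℝ)..s, μ r (Q r) / γ r (Q r))) < 1 := by
  -- projection onto [0,m]
  set P : ℝ → ℝ := fun s => max 0 (min s m) with hPdef
  have hP : Continuous P := continuous_const.max (continuous_id.min continuous_const)
  have hPmem : ∀ s, P s ∈ Icc (0:ℝ) m := fun s =>
    ⟨le_max_left _ _, max_le hm.le (min_le_right s m)⟩
  have hPid : ∀ s ∈ Icc (0:ℝ) m, P s = s := by
    intro s hs
    simp [hPdef, min_eq_left hs.2, max_eq_right hs.1]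
  set Qe : ℝ → ℝ := fun s => Q (P s) with hQedef
  have hQe : Continuous Qe := by
    rw [← continuousOn_univ]
    exact hQ.comp hP.continuousOn fun x _ => hPmem x
  have hQeq : ∀ s ∈ Icc (0:ℝ) m, Qe s = Q s := fun s hs => by
    simp [hQedef, hPid s hs]
  set f : ℝ → ℝ := fun s => μ s (Qe s) / γ s (Qe s) with hfdef
  have hf : Continuous f := by
    apply Continuous.div
    · exact hμ.comp (continuous_id.prodMk hQe)
    · exact hγ.comp (continuous_id.prodMk hQe)
    · exact fun s => (hγpos s (Qe s)).ne'
  set F : ℝ → ℝ := fun s => ∫ r in (0:ℝ)..s, f r with hFdef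
  have hFd : ∀ s : ℝ, HasDerivAt F (f s) s := fun s =>
    (hf.integral_hasStrictDerivAt 0 s).hasDerivAt
  have hF0 : F 0 = 0 := by simp [hFdef]
  set g : ℝ → ℝ := fun s => f s * Real.exp (-F s) with hgdef
  have hFc : Continuous F := Differentiable.continuous fun s => (hFd s).differentiableAt
  have hg : Continuous g := hf.mul (continuous_neg.comp hFc).rexp
  -- key FTC computation
  have key : (∫ s in (0:ℝ)..m, g s) = 1 - Real.exp (-F m) := by
    have hderiv : ∀ s ∈ uIcc (0:ℝ) m,
        HasDerivAt (fun u => -Real.exp (-F u)) (g s) s := by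
      intro s _
      have h1 : HasDerivAt (fun u => Real.exp (-F u)) (Real.exp (-F s) * -(f s)) s :=
        (hFd s).neg.exp
      have : HasDerivAt (fun u => -Real.exp (-F u)) (-(Real.exp (-F s) * -(f s))) s := h1.neg
      convert this using 1
      show f s * Real.exp (-F s) = _; ring
    rw [intervalIntegral.integral_eq_sub_of_hasDerivAt hderiv (hg.intervalIntegrable 0 m)]
    simp [hF0]; ring
  -- rewrite original integrand as h on [0,m]
  set h : ℝ → ℝ := fun s => β s (Qe s) * (γ 0 (Qe 0) / γ s (Qe s)) * Real.exp (-F s)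
    with hhdef
  have hh : Continuous h := by
    apply Continuous.mul
    · exact (hβ.comp (continuous_id.prodMk hQe)).mul
        (continuous_const.div (hγ.comp (continuous_id.prodMk hQe))
          fun s => (hγpos s (Qe s)).ne')
    · exact (continuous_neg.comp hFc).rexp
  have h0m : (0:ℝ) ∈ Icc (0:ℝ) m := ⟨le_rfl, hm.le⟩
  have heq : (∫ s in (0:ℝ)..m, β s (Q s) * (γ 0 (Q 0) / γ s (Q s)) *
      Real.exp (-∫ r in (0:ℝ)..s, μ r (Q r) / γ r (Q r))) = ∫ s in (0:ℝ)..m, h s := by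
    apply intervalIntegral.integral_congr
    intro s hs
    rw [uIcc_of_le hm.le] at hs
    have hinner : (∫ r in (0:ℝ)..s, μ r (Q r) / γ r (Q r)) = F s := by
      apply intervalIntegral.integral_congr
      intro r hr
      rw [uIcc_of_le hs.1] at hr
      have hrm : r ∈ Icc (0:ℝ) m := ⟨hr.1, hr.2.trans hs.2⟩
      simp [hfdef, hQeq r hrm]
    simp only [hhdef, hinner, hQeq s hs, hQeq 0 h0m]
  rw [heq]
  have hmono : (∫ s in (0:ℝ)..m, h s) ≤ ∫ s in (0:ℝ)..m, g s := by
    apply intervalIntegral.integral_mono_on hm.le (hh.intervalIntegrable 0 m)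
      (hg.intervalIntegrable 0 m)
    intro s hs
    have hb : β s (Qe s) * (γ 0 (Qe 0) / γ s (Qe s)) ≤ f s := by
      simp only [hfdef, hQeq s hs, hQeq 0 h0m]
      rw [mul_div_assoc']
      gcongr
      · exact (hγpos s (Q s)).le
      · linarith [hdiss s hs]
    exact mul_le_mul_of_nonneg_right hb (Real.exp_nonneg _)
  calc (∫ s in (0:ℝ)..m, h s) ≤ ∫ s in (0:ℝ)..m, g s := hmono
    _ = 1 - Real.exp (-F m) := key
    _ < 1 := by linarith [Real.exp_pos (-F m)]
end

section
/- Let α ∈ [0,1), m > 0, and let γ_*, ρ_*, σ_* : [0,m] → ℝ be continuous with γ_* > 0, and w ∈ C¹([0,m]) positive. Suppose v ∈ C¹([0,m]) satisfies γ_*(s)·v'(s) + (λ + ρ_*(s))·v(s) + σ_*(s)·V(s) = 0 where V(s) = α·∫₀ˢ w·v + ∫ₛᵐ w·v. Then V satisfies the second-order ODE V''(s) + V'(s)·((ρ_*(s)+λ)/γ_*(s) − w'(s)/w(s)) + V(s)·(α−1)·w(s)·σ_*(s)/γ_*(s) = 0 on (0,m). -/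
open Set intervalIntegral

theorem stmt15 (m : ℝ) (hm : 0 < m) (α l : ℝ) (hα : α ∈ Ico (0:ℝ) 1)
    (γ ρ σ w w' v v' : ℝ → ℝ)
    (hγ : ContinuousOn γ (Icc 0 m)) (hγpos : ∀ s ∈ Icc (0:ℝ) m, 0 < γ s)
    (hρ : ContinuousOn ρ (Icc 0 m)) (hσ : ContinuousOn σ (Icc 0 m))
    (hw : ∀ s ∈ Icc (0:ℝ) m, HasDerivAt w (w' s) s)
    (hw'c : ContinuousOn w' (Icc 0 m))
    (hwpos : ∀ s ∈ Icc (0:ℝ) m, 0 < w s)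
    (hv : ∀ s ∈ Icc (0:ℝ) m, HasDerivAt v (v' s) s)
    (hv'c : ContinuousOn v' (Icc 0 m))
    (V : ℝ → ℝ)
    (hV : ∀ s, V s = α * (∫ η in (0:ℝ)..s, w η * v η) + ∫ η in s..m, w η * v η)
    -- eigenvalue equation for v
    (hode : ∀ s ∈ Icc (0:ℝ) m, γ s * v' s + (l + ρ s) * v s + σ s * V s = 0) :
    ∀ s ∈ Ioo (0:ℝ) m,
      deriv (deriv V) s + deriv V s * ((ρ s + l) / γ s - w' s / w s)
        + V s * ((α - 1) * w s * σ s / γ s) = 0 := by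
  set f : ℝ → ℝ := fun η => w η * v η with hf
  have hfc : ContinuousOn f (Icc 0 m) := fun s hs =>
    ((hw s hs).continuousAt.continuousWithinAt.mul (hv s hs).continuousAt.continuousWithinAt)
  have hint : ∀ a ∈ Icc (0:ℝ) m, ∀ b ∈ Icc (0:ℝ) m, IntervalIntegrable f MeasureTheory.volume a b := by
    intro a ha b hb
    exact (hfc.mono (uIcc_subset_Icc ha hb)).intervalIntegrable
  have hI : ∀ s ∈ Icc (0:ℝ) m,
      (∫ η in s..m, f η) = (∫ η in (0:ℝ)..m, f η) - ∫ η in (0:ℝ)..s, f η := by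
    intro s hs
    have := integral_add_adjacent_intervals (hint 0 (by constructor <;> simp [hm.le]) s hs)
      (hint s hs m (by constructor <;> simp [hm.le]))
    linarith
  set F : ℝ → ℝ := fun u => ∫ η in (0:ℝ)..u, f η with hFdef
  have hF : ∀ s ∈ Ioo (0:ℝ) m, HasDerivAt F (f s) s := by
    intro s hs
    have hsI : s ∈ Icc (0:ℝ) m := Ioo_subset_Icc_self hs
    exact integral_hasDerivAt_right (hint 0 (by constructor <;> simp [hm.le]) s hsI)
      ((hfc.mono Ioo_subset_Icc_self).stronglyMeasurableAtFilter isOpen_Ioo s hs)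
      (hfc.continuousAt (Icc_mem_nhds hs.1 hs.2))
  have hV' : ∀ s ∈ Ioo (0:ℝ) m, HasDerivAt V ((α - 1) * (w s * v s)) s := by
    intro s hs
    have heq : V =ᶠ[nhds s] fun u => (∫ η in (0:ℝ)..m, f η) + (α - 1) * F u := by
      filter_upwards [Ioo_mem_nhds hs.1 hs.2] with u hu
      rw [hV u, hI u (Ioo_subset_Icc_self hu)]
      ring
    have h : HasDerivAt (fun u => (∫ η in (0:ℝ)..m, f η) + (α - 1) * F u)
        ((α - 1) * (w s * v s)) s := by
      have := ((hF s hs).const_mul (α - 1)).const_add (∫ η in (0:ℝ)..m, f η)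
      simpa [hf] using this
    exact h.congr_of_eventuallyEq heq
  intro s hs
  have hsI : s ∈ Icc (0:ℝ) m := Ioo_subset_Icc_self hs
  have hd1 : deriv V s = (α - 1) * (w s * v s) := (hV' s hs).deriv
  have heq2 : deriv V =ᶠ[nhds s] fun u => (α - 1) * (w u * v u) := by
    filter_upwards [Ioo_mem_nhds hs.1 hs.2] with u hu
    exact (hV' u hu).deriv
  have hd2 : deriv (deriv V) s = (α - 1) * (w' s * v s + w s * v' s) := by
    rw [heq2.deriv_eq]
    exact (((hw s hsI).mul (hv s hsI)).const_mul (α - 1)).deriv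
  have hγ0 : γ s ≠ 0 := (hγpos s hsI).ne'
  have hw0 : w s ≠ 0 := (hwpos s hsI).ne'
  have hodes := hode s hsI
  rw [hd1, hd2]
  field_simp
  linear_combination ((α - 1) * w s) * hodes
end
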